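/- arXiv:2112.00172 — 3 statements merged into one kernel-verified Lean document; each statement's English description precedes it below -/
import Mathlib

section
/- The compensated counting process M(t) = 1{U ≤ t, δ = 1} − ∫_0^t R(s) λ(s) ds, t ≥ 0, is a martingale with respect to the observed-data filtration F_t = σ(1{U ≤ s}, δ·1{U ≤ s} : s ≤ t). -/
open MeasureTheory ProbabilityTheory Real
open scoped NNReal

section SurvivalAux
open intervalIntegral Set Filter
open scoped ENNReal

variable {lam : ℝ → ℝ}

-- local notation
noncomputable def Fh (lam : ℝ → ℝ) (u : ℝ) : ℝ := ∫ s in (0:ℝ)..u, lam s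

lemma two_point (hmeas : Measurable lam)
    (hint : ∀ a b : ℝ, IntervalIntegrable lam volume a b) (h0 : ∀ s, 0 ≤ lam s)
    {u v : ℝ} (hu : 0 ≤ u) (huv : u ≤ v) :
    |(∫ x in u..v, lam x * Real.exp (-(Fh lam x)))
        - (Real.exp (-(Fh lam u)) - Real.exp (-(Fh lam v)))|
      ≤ (Fh lam v - Fh lam u)^2 := by
  set F := Fh lam with hF
  have hFmono : Monotone F := by
    intro a b hab
    have := intervalIntegral.integral_add_adjacent_intervals (hint 0 a) (hint a b)
    have h2 : 0 ≤ ∫ s in a..b, lam s :=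
      intervalIntegral.integral_nonneg hab (fun x _ => h0 x)
    simp only [hF, Fh] at this ⊢; linarith
  have hFcont : Continuous F := intervalIntegral.continuous_primitive hint 0
  have hFuv : F v - F u = ∫ s in u..v, lam s := by
    have := intervalIntegral.integral_add_adjacent_intervals (hint 0 u) (hint u v)
    simp only [hF, Fh] at this ⊢; linarith
  set Δ := F v - F u with hΔ
  have hΔ0 : 0 ≤ Δ := sub_nonneg.2 (hFmono huv)
  have hFu0 : 0 ≤ F u := intervalIntegral.integral_nonneg hu (fun x _ => h0 x)
  set Eu := Real.exp (-(F u)) with hEu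
  set Ev := Real.exp (-(F v)) with hEv
  have hEu1 : Eu ≤ 1 := by
    rw [hEu, Real.exp_le_one_iff]; linarith
  have hEupos : 0 < Eu := Real.exp_pos _
  have hEvpos : 0 < Ev := Real.exp_pos _
  have hEuv : Eu = Ev * Real.exp Δ := by
    rw [hEu, hEv, ← Real.exp_add, hΔ]; ring_nf
  have hintegrable : ∀ a b : ℝ, IntervalIntegrable (fun x => lam x * Real.exp (-(F x))) volume a b := by
    intro a b
    exact (hint a b).mul_continuousOn ((Real.continuous_exp.comp hFcont.neg).continuousOn)
  set I := ∫ x in u..v, lam x * Real.exp (-(F x)) with hI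
  -- bounds on I
  have hIlow : Ev * Δ ≤ I := by
    have : ∫ x in u..v, lam x * Ev ≤ I := by
      apply intervalIntegral.integral_mono_on huv
        ((hint u v).mul_const _) (hintegrable u v)
      intro x hx
      have : F x ≤ F v := hFmono hx.2
      have := Real.exp_le_exp.2 (neg_le_neg this)
      exact mul_le_mul_of_nonneg_left this (h0 x)
    rw [intervalIntegral.integral_mul_const, ← hFuv] at this
    linarith [mul_comm Ev Δ]
  have hIhigh : I ≤ Eu * Δ := by
    have : I ≤ ∫ x in u..v, lam x * Eu := by
      apply intervalIntegral.integral_mono_on huv (hintegrable u v)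
        ((hint u v).mul_const _)
      intro x hx
      have : F u ≤ F x := hFmono hx.1
      have := Real.exp_le_exp.2 (neg_le_neg this)
      exact mul_le_mul_of_nonneg_left this (h0 x)
    rw [intervalIntegral.integral_mul_const, ← hFuv] at this
    linarith [mul_comm Eu Δ]
  -- bounds on Eu - Ev
  have hDlow : Ev * Δ ≤ Eu - Ev := by
    have h1 : Δ + 1 ≤ Real.exp Δ := Real.add_one_le_exp Δ
    nlinarith
  have hDhigh : Eu - Ev ≤ Eu * Δ := by
    have h1 : -Δ + 1 ≤ Real.exp (-Δ) := Real.add_one_le_exp (-Δ)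
    have h2 : Ev = Eu * Real.exp (-Δ) := by
      rw [hEu, hEv, ← Real.exp_add, hΔ]; ring_nf
    nlinarith
  have hgap : Eu * Δ - Ev * Δ ≤ Δ^2 := by nlinarith
  rw [abs_le]
  constructor <;> nlinarith




lemma ftc_exp {lam : ℝ → ℝ} (hmeas : Measurable lam)
    (hint : ∀ a b : ℝ, IntervalIntegrable lam volume a b) (h0 : ∀ s, 0 ≤ lam s)
    {a b : ℝ} (ha : 0 ≤ a) (hab : a ≤ b) :
    ∫ x in a..b, lam x * Real.exp (-(Fh lam x))
      = Real.exp (-(Fh lam a)) - Real.exp (-(Fh lam b)) := by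
  set F := Fh lam with hF
  have hFmono : Monotone F := by
    intro x y hxy
    have h1 := intervalIntegral.integral_add_adjacent_intervals (hint 0 x) (hint x y)
    have h2 : 0 ≤ ∫ s in x..y, lam s :=
      intervalIntegral.integral_nonneg hxy (fun z _ => h0 z)
    simp only [hF, Fh] at h1 ⊢; linarith
  have hFcont : Continuous F := intervalIntegral.continuous_primitive hint 0
  have hintegrable : ∀ c d : ℝ, IntervalIntegrable (fun x => lam x * Real.exp (-(F x))) volume c d :=
    fun c d => (hint c d).mul_continuousOn ((Real.continuous_exp.comp hFcont.neg).continuousOn)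
  set D := F b - F a with hD
  have hD0 : 0 ≤ D := sub_nonneg.2 (hFmono hab)
  set X := (∫ x in a..b, lam x * Real.exp (-(F x))) - (Real.exp (-(F a)) - Real.exp (-(F b))) with hX
  have key : ∀ n : ℕ, 0 < n → |X| ≤ D^2 / n := by
    intro n hn
    have hnR : (0:ℝ) < n := Nat.cast_pos.2 hn
    rcases eq_or_lt_of_le hD0 with hD0' | hDpos
    · have h := two_point hmeas hint h0 ha hab
      rw [← hF, ← hD, ← hD0'] at h
      have : |X| ≤ 0 := by simpa using h
      calc |X| ≤ 0 := this
        _ ≤ D^2 / n := by positivity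
    have hIVT : ∀ i : ℕ, i ≤ n → ∃ t, t ∈ Icc a b ∧ F t = F a + i * D / n := by
      intro i hi
      have hmem : F a + i * D / n ∈ Icc (F a) (F b) := by
        constructor
        · have : 0 ≤ (i:ℝ) * D / n := by positivity
          linarith
        · have hin : (i:ℝ) ≤ n := by exact_mod_cast hi
          have : (i:ℝ) * D / n ≤ D := by
            rw [div_le_iff₀ hnR]; nlinarith
          linarith
      obtain ⟨t, ht, hFt⟩ := intermediate_value_Icc hab hFcont.continuousOn hmem
      exact ⟨t, ht, hFt⟩
    classical
    choose t ht hFt using fun i (hi : i ≤ n) => hIVT i hi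
    set s : ℕ → ℝ := fun i => if h : i = 0 then a else if h2 : n ≤ i then b else
      t i (le_of_lt (lt_of_not_ge h2)) with hs
    have hs0 : s 0 = a := by simp [hs]
    have hsn : s n = b := by simp [hs, hn.ne']
    have hnR' : (n:ℝ) ≠ 0 := ne_of_gt hnR
    have hsF : ∀ i, i ≤ n → F (s i) = F a + i * D / n := by
      intro i hi
      by_cases h1 : i = 0
      · subst h1; simp [hs0]
      by_cases h2 : n ≤ i
      · rw [show i = n from le_antisymm hi h2, hsn]
        field_simp
        rw [hD]; ring
      · simp only [hs, dif_neg h1, dif_neg h2]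
        exact hFt i _
    have hsIcc : ∀ i, i ≤ n → s i ∈ Icc a b := by
      intro i hi
      by_cases h1 : i = 0
      · subst h1; rw [hs0]; exact ⟨le_refl a, hab⟩
      by_cases h2 : n ≤ i
      · rw [show i = n from le_antisymm hi h2, hsn]; exact ⟨hab, le_refl b⟩
      · simp only [hs, dif_neg h1, dif_neg h2]; exact ht i _
    have hsmono : ∀ i, i < n → s i ≤ s (i+1) := by
      intro i hi
      have hci : F (s i) < F (s (i+1)) := by
        rw [hsF i hi.le, hsF (i+1) hi]
        have h1 : (i:ℝ) < (i:ℝ)+1 := by linarith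
        have : (i:ℝ) * D / n < ((i:ℝ)+1) * D / n := by
          rw [div_lt_div_iff₀ hnR hnR]; nlinarith
        push_cast
        linarith
      by_contra hc
      push_neg at hc
      exact absurd (hFmono hc.le) (not_le.2 hci)
    set φ : ℕ → ℝ := fun i => (∫ x in a..(s i), lam x * Real.exp (-(F x))) + Real.exp (-(F (s i))) with hφ
    have hstep : ∀ i, i < n → |φ (i+1) - φ i| ≤ (D/n)^2 := by
      intro i hi
      have hadj := intervalIntegral.integral_add_adjacent_intervals
        (hintegrable a (s i)) (hintegrable (s i) (s (i+1)))
      have hsi0 : 0 ≤ s i := le_trans ha (hsIcc i hi.le).1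
      have h2p := two_point hmeas hint h0 hsi0 (hsmono i hi)
      rw [← hF] at h2p
      have hΔeq : F (s (i+1)) - F (s i) = D / n := by
        rw [hsF (i+1) hi, hsF i hi.le]
        push_cast; field_simp; ring
      have hφeq : φ (i+1) - φ i = (∫ x in (s i)..(s (i+1)), lam x * Real.exp (-(F x)))
          - (Real.exp (-(F (s i))) - Real.exp (-(F (s (i+1))))) := by
        simp only [hφ]; rw [← hadj]; ring
      rw [hφeq]
      calc _ ≤ (F (s (i+1)) - F (s i))^2 := h2p
        _ = (D/n)^2 := by rw [hΔeq]
    have htele : φ n - φ 0 = ∑ i ∈ Finset.range n, (φ (i+1) - φ i) := (Finset.sum_range_sub φ n).symm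
    have hXeq : X = φ n - φ 0 := by
      simp only [hX, hφ, hs0, hsn, intervalIntegral.integral_same]
      ring
    rw [hXeq, htele]
    calc |∑ i ∈ Finset.range n, (φ (i+1) - φ i)| ≤ ∑ i ∈ Finset.range n, |φ (i+1) - φ i| :=
        Finset.abs_sum_le_sum_abs _ _
      _ ≤ ∑ _i ∈ Finset.range n, (D/n)^2 :=
        Finset.sum_le_sum (fun i hi => hstep i (Finset.mem_range.1 hi))
      _ = n * (D/n)^2 := by rw [Finset.sum_const, Finset.card_range]; ring
      _ = D^2 / n := by field_simp
  have hX0 : X = 0 := by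
    by_contra hc
    have habs : 0 < |X| := abs_pos.2 hc
    obtain ⟨n, hngt⟩ := exists_nat_gt (D^2 / |X|)
    have hn1 : 0 < n + 1 := Nat.succ_pos n
    have hle := key (n+1) hn1
    have hgt : (D^2 / |X|) < (n+1 : ℝ) := by
      push_cast at hngt ⊢; linarith
    have : D^2 / ((n:ℝ)+1) < |X| := by
      rw [div_lt_iff₀ (by positivity)]
      rw [div_lt_iff₀ habs] at hgt
      linarith [hgt]
    push_cast at hle
    linarith
  have := hX0
  rw [hX] at this
  linarith




variable {Ω : Type*} [m0 : MeasurableSpace Ω] (P : Measure Ω) [IsProbabilityMeasure P]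
  {T C : Ω → ℝ} (hTmeas : Measurable T) (hCmeas : Measurable C)
  {lam : ℝ → ℝ} (hmeas : Measurable lam)
  (hint : ∀ a b : ℝ, IntervalIntegrable lam volume a b) (h0 : ∀ s, 0 ≤ lam s)
  (hhaz : ∀ t : ℝ, 0 ≤ t →
      P {ω | t < T ω} = ENNReal.ofReal (Real.exp (-∫ s in (0:ℝ)..t, lam s)))

include hTmeas hmeas hint h0 hhaz in
lemma T_Ioc {a b : ℝ} (ha : 0 ≤ a) (hab : a ≤ b) :
    P {ω | a < T ω ∧ T ω ≤ b}
      = ENNReal.ofReal (∫ u in a..b, lam u * Real.exp (-(Fh lam u))) := by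
  have hseteq : {ω | a < T ω ∧ T ω ≤ b} = {ω | a < T ω} \ {ω | b < T ω} := by
    ext ω; simp only [mem_setOf_eq, mem_diff, not_lt]
  have hsub : {ω | b < T ω} ⊆ {ω | a < T ω} := fun ω h => lt_of_le_of_lt hab h
  have hmb : MeasurableSet {ω | b < T ω} := hTmeas measurableSet_Ioi
  rw [hseteq, measure_diff hsub hmb.nullMeasurableSet (measure_ne_top P _),
    hhaz a ha, hhaz b (le_trans ha hab)]
  rw [ftc_exp hmeas hint h0 ha hab]
  rw [ENNReal.ofReal_sub _ (le_of_lt (Real.exp_pos _))]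
  rfl

include hTmeas hmeas hint h0 hhaz in
lemma T_Ici {u : ℝ} (hu : 0 < u) :
    P {ω | u ≤ T ω} = ENNReal.ofReal (Real.exp (-(Fh lam u))) := by
  have hFcont : Continuous (fun x => Real.exp (-(Fh lam x))) :=
    Real.continuous_exp.comp (intervalIntegral.continuous_primitive hint 0).neg
  set s : ℕ → Set Ω := fun n => {ω | u - 1/(n+1) < T ω} with hs
  have hmono : Antitone s := by
    intro m n hmn
    apply Set.setOf_subset_setOf.2
    intro ω h
    have : u - 1/((m:ℝ)+1) ≤ u - 1/((n:ℝ)+1) := by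
      have : (1:ℝ)/((n:ℝ)+1) ≤ 1/((m:ℝ)+1) := by
        apply one_div_le_one_div_of_le (by positivity)
        exact_mod_cast Nat.succ_le_succ hmn
      linarith
    linarith
  have hiInter : ⋂ n, s n = {ω | u ≤ T ω} := by
    ext ω
    simp only [mem_iInter, hs, mem_setOf_eq]
    constructor
    · intro h
      by_contra hc
      push_neg at hc
      obtain ⟨n, hn⟩ := exists_nat_gt (1/(u - T ω))
      have hpos : 0 < u - T ω := by linarith
      have h1 : 1/((n:ℝ)+1) < u - T ω := by
        rw [div_lt_iff₀ (by positivity)]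
        rw [div_lt_iff₀ hpos] at hn
        nlinarith
      have := h n
      linarith
    · intro h n
      have : (0:ℝ) < 1/((n:ℝ)+1) := by positivity
      linarith
  have htendsto := tendsto_measure_iInter_atTop (μ := P) (s := s)
    (fun n => ((hTmeas measurableSet_Ioi).nullMeasurableSet)) hmono ⟨0, measure_ne_top P _⟩
  rw [hiInter] at htendsto
  -- values of P (s n) eventually
  have heval : ∀ᶠ n : ℕ in atTop, (P ∘ s) n
      = ENNReal.ofReal (Real.exp (-(Fh lam (u - 1/(n+1))))) := by
    obtain ⟨N, hN⟩ := exists_nat_gt (1/u)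
    filter_upwards [eventually_ge_atTop N] with n hn
    have hnn : 0 ≤ u - 1/((n:ℝ)+1) := by
      have hNpos : (0:ℝ) < N := lt_trans (by positivity) hN
      have h2 : (1:ℝ) < u * N := by rw [div_lt_iff₀ hu] at hN; nlinarith
      have h3 : 1/((n:ℝ)+1) ≤ 1/(N:ℝ) := by
        apply one_div_le_one_div_of_le hNpos
        have : (N:ℝ) ≤ n := Nat.cast_le.2 hn
        linarith
      have h4 : 1/(N:ℝ) < u := by rw [div_lt_iff₀ hNpos]; nlinarith
      linarith
    exact hhaz _ hnn
  have hlim2 : Tendsto (fun n : ℕ => ENNReal.ofReal (Real.exp (-(Fh lam (u - 1/(n+1))))))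
      atTop (nhds (ENNReal.ofReal (Real.exp (-(Fh lam u))))) := by
    apply (ENNReal.continuous_ofReal.tendsto _).comp
    apply (hFcont.tendsto u).comp
    have : Tendsto (fun n : ℕ => u - 1/((n:ℝ)+1)) atTop (nhds (u - 0)) := by
      apply Tendsto.const_sub
      exact tendsto_one_div_add_atTop_nhds_zero_nat
    simpa using this
  exact tendsto_nhds_unique (Tendsto.congr' heval htendsto) hlim2





include hTmeas hmeas hint h0 in
lemma T_density
  (hhaz : ∀ t : ℝ, 0 ≤ t →
      P {ω | t < T ω} = ENNReal.ofReal (Real.exp (-∫ s in (0:ℝ)..t, lam s)))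
  {s t : ℝ} (hs : 0 ≤ s) (hst : s ≤ t) :
    (P.map T).restrict (Ioc s t)
      = (volume.withDensity (fun u => ENNReal.ofReal (lam u * Real.exp (-(Fh lam u))))).restrict
          (Ioc s t) := by
  set w : ℝ → ℝ≥0∞ := fun u => ENNReal.ofReal (lam u * Real.exp (-(Fh lam u))) with hw
  have hgi : ∀ c d : ℝ, IntervalIntegrable (fun x => lam x * Real.exp (-(Fh lam x))) volume c d :=
    fun c d => (hint c d).mul_continuousOn ((Real.continuous_exp.comp
      (intervalIntegral.continuous_primitive hint 0).neg).continuousOn)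
  have hwmeas : Measurable w := by
    apply ENNReal.measurable_ofReal.comp
    exact hmeas.mul ((Real.continuous_exp.comp
      (intervalIntegral.continuous_primitive hint 0).neg).measurable)
  have hTlaw : IsProbabilityMeasure (P.map T) := Measure.isProbabilityMeasure_map hTmeas.aemeasurable
  have hIocVal : ∀ c d : ℝ, (volume.withDensity w) (Ioc c d)
      = ENNReal.ofReal (∫ x in Ioc c d, lam x * Real.exp (-(Fh lam x))) := by
    intro c d
    rw [withDensity_apply _ measurableSet_Ioc]
    rcases le_or_gt c d with hcd | hcd
    · rw [ofReal_integral_eq_lintegral_ofReal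
        ((hgi c d).1.mono_set (by simp [uIoc_of_le hcd]))
        (Filter.Eventually.of_forall (fun x => mul_nonneg (h0 x) (le_of_lt (Real.exp_pos _))))]
    · simp [Ioc_eq_empty (not_lt.2 hcd.le)]
  have hfin : IsFiniteMeasure ((volume.withDensity w).restrict (Ioc s t)) := by
    constructor
    rw [Measure.restrict_apply_univ, hIocVal]
    exact ENNReal.ofReal_lt_top
  apply Measure.ext_of_Iic
  intro c
  rw [Measure.restrict_apply measurableSet_Iic, Measure.restrict_apply measurableSet_Iic]
  have hseteq : Iic c ∩ Ioc s t = Ioc s (min t c) := by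
    ext x; simp only [mem_inter_iff, mem_Iic, mem_Ioc, lt_min_iff, le_min_iff]
    constructor
    · rintro ⟨h1, h2, h3⟩; exact ⟨h2, h3, h1⟩
    · rintro ⟨h1, h2, h3⟩; exact ⟨h3, h1, h2⟩
  rw [hseteq, hIocVal]
  rcases le_or_gt s (min t c) with hsm | hsm
  · rw [Measure.map_apply hTmeas measurableSet_Ioc]
    have : T ⁻¹' Ioc s (min t c) = {ω | s < T ω ∧ T ω ≤ min t c} := rfl
    rw [this, T_Ioc P hTmeas hmeas hint h0 hhaz hs hsm,
      intervalIntegral.integral_of_le hsm]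
  · rw [Ioc_eq_empty (not_lt.2 hsm.le)]
    simp





include hTmeas hCmeas hmeas hint h0 in
lemma N_incr (hTC : IndepFun T C P)
  (hhaz : ∀ t : ℝ, 0 ≤ t →
      P {ω | t < T ω} = ENNReal.ofReal (Real.exp (-∫ s in (0:ℝ)..t, lam s)))
  {s t : ℝ} (hs : 0 ≤ s) (hst : s ≤ t) :
    P {ω | T ω ≤ C ω ∧ s < T ω ∧ T ω ≤ t}
      = ∫⁻ u in Ioc s t,
          ENNReal.ofReal (lam u * Real.exp (-(Fh lam u))) * (P.map C) (Ici u) := by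
  set w : ℝ → ℝ≥0∞ := fun u => ENNReal.ofReal (lam u * Real.exp (-(Fh lam u))) with hw
  have hwmeas : Measurable w :=
    ENNReal.measurable_ofReal.comp (hmeas.mul ((Real.continuous_exp.comp
      (intervalIntegral.continuous_primitive hint 0).neg).measurable))
  have hgmeas : Measurable (fun x : ℝ => (P.map C) (Ici x)) := by
    have : Antitone (fun x : ℝ => (P.map C) (Ici x)) :=
      fun x y hxy => measure_mono (Ici_subset_Ici.2 hxy)
    exact this.measurable
  set Epr : Set (ℝ × ℝ) := {p | s < p.1 ∧ p.1 ≤ t ∧ p.1 ≤ p.2} with hEpr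
  have hEprm : MeasurableSet Epr := by
    apply MeasurableSet.inter (measurable_fst measurableSet_Ioi)
    exact MeasurableSet.inter (measurable_fst measurableSet_Iic)
      (measurableSet_le measurable_fst measurable_snd)
  have hset : {ω | T ω ≤ C ω ∧ s < T ω ∧ T ω ≤ t} = (fun ω => (T ω, C ω)) ⁻¹' Epr := by
    ext ω; simp only [mem_setOf_eq, mem_preimage, hEpr]; tauto
  have hmap : P.map (fun ω => (T ω, C ω)) = (P.map T).prod (P.map C) :=
    (indepFun_iff_map_prod_eq_prod_map_map hTmeas.aemeasurable hCmeas.aemeasurable).1 hTC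
  rw [hset, ← Measure.map_apply (hTmeas.prodMk hCmeas) hEprm, hmap,
    Measure.prod_apply hEprm]
  have hslice : (fun x => (P.map C) (Prod.mk x ⁻¹' Epr))
      = (Ioc s t).indicator (fun x => (P.map C) (Ici x)) := by
    funext x
    by_cases hx : x ∈ Ioc s t
    · rw [indicator_of_mem hx]
      congr 1
      ext y; simp only [mem_preimage, hEpr, mem_setOf_eq, mem_Ici]
      exact ⟨fun h => h.2.2, fun h => ⟨hx.1, hx.2, h⟩⟩
    · rw [indicator_of_notMem hx]
      convert measure_empty
      · ext y
        simp only [mem_preimage, hEpr, mem_setOf_eq, mem_empty_iff_false, iff_false]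
        intro h
        exact hx ⟨h.1, h.2.1⟩
      · infer_instance
  calc ∫⁻ x, (P.map C) (Prod.mk x ⁻¹' Epr) ∂(P.map T)
      = ∫⁻ x, (Ioc s t).indicator (fun x => (P.map C) (Ici x)) x ∂(P.map T) :=
        lintegral_congr (fun x => congrFun hslice x)
    _ = ∫⁻ x in Ioc s t, (P.map C) (Ici x) ∂(P.map T) :=
        lintegral_indicator measurableSet_Ioc _
    _ = ∫⁻ x in Ioc s t, (P.map C) (Ici x) ∂(volume.withDensity w) := by
        rw [show ((P.map T).restrict (Ioc s t)) = ((volume.withDensity w).restrict (Ioc s t)) from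
          T_density P hTmeas hmeas hint h0 hhaz hs hst]
    _ = ∫⁻ x in Ioc s t, w x * (P.map C) (Ici x) ∂volume := by
        rw [restrict_withDensity measurableSet_Ioc,
          lintegral_withDensity_eq_lintegral_mul _ hwmeas hgmeas]
        rfl
    _ = ∫⁻ u in Ioc s t, ENNReal.ofReal (lam u * Real.exp (-(Fh lam u))) * (P.map C) (Ici u) ∂volume := rfl





include hTmeas hCmeas hmeas hint h0 in
lemma U_tail (hTC : IndepFun T C P)
  (hhaz : ∀ t : ℝ, 0 ≤ t →
      P {ω | t < T ω} = ENNReal.ofReal (Real.exp (-∫ s in (0:ℝ)..t, lam s)))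
  {U : Ω → ℝ} (hU : ∀ ω, U ω = min (T ω) (C ω)) {u : ℝ} (hu : 0 < u) :
    P {ω | u ≤ U ω}
      = ENNReal.ofReal (Real.exp (-(Fh lam u))) * (P.map C) (Ici u) := by
  have hset : {ω | u ≤ U ω} = T ⁻¹' (Ici u) ∩ C ⁻¹' (Ici u) := by
    ext ω
    simp only [mem_setOf_eq, mem_inter_iff, mem_preimage, mem_Ici, hU ω, le_min_iff]
  rw [hset, hTC.measure_inter_preimage_eq_mul _ _ measurableSet_Ici measurableSet_Ici]
  rw [show T ⁻¹' (Ici u) = {ω | u ≤ T ω} from rfl,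
    T_Ici P hTmeas hmeas hint h0 hhaz hu,
    Measure.map_apply hCmeas measurableSet_Ici]

include hTmeas hCmeas hmeas hint h0 in
lemma A_incr (hTC : IndepFun T C P)
  (hhaz : ∀ t : ℝ, 0 ≤ t →
      P {ω | t < T ω} = ENNReal.ofReal (Real.exp (-∫ s in (0:ℝ)..t, lam s)))
  {U : Ω → ℝ} (hU : ∀ ω, U ω = min (T ω) (C ω)) {s t : ℝ} (hs : 0 ≤ s) (hst : s ≤ t) :
    ∫⁻ ω, ENNReal.ofReal (∫ u in s..t, (if u ≤ U ω then (1:ℝ) else 0) * lam u) ∂P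
      = ∫⁻ u in Ioc s t,
          ENNReal.ofReal (lam u * Real.exp (-(Fh lam u))) * (P.map C) (Ici u) := by
  have hUmeas : Measurable U := by
    have : U = fun ω => min (T ω) (C ω) := funext hU
    rw [this]; exact hTmeas.min hCmeas
  -- step 1: inner ofReal to lintegral
  have hstep1 : ∀ ω, ENNReal.ofReal (∫ u in s..t, (if u ≤ U ω then (1:ℝ) else 0) * lam u)
      = ∫⁻ u in Ioc s t, ENNReal.ofReal ((if u ≤ U ω then (1:ℝ) else 0) * lam u) := by
    intro ω
    rw [intervalIntegral.integral_of_le hst]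
    apply ofReal_integral_eq_lintegral_ofReal
    · have hlamIoc : IntegrableOn lam (Ioc s t) volume :=
        (hint s t).1
      have heq : (fun u => (if u ≤ U ω then (1:ℝ) else 0) * lam u)
          = (Iic (U ω)).indicator lam := by
        funext u
        by_cases h : u ≤ U ω
        · simp [h, indicator_of_mem (mem_Iic.2 h)]
        · simp [h, indicator_of_notMem (fun hc => h (mem_Iic.1 hc))]
      rw [heq]
      exact hlamIoc.indicator measurableSet_Iic
    · apply Filter.Eventually.of_forall
      intro u
      by_cases h : u ≤ U ω <;> simp [h, h0 u]
  simp_rw [hstep1]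
  -- step 2: swap
  have hswap : ∫⁻ ω, (∫⁻ u in Ioc s t, ENNReal.ofReal ((if u ≤ U ω then (1:ℝ) else 0) * lam u)) ∂P
      = ∫⁻ u in Ioc s t, (∫⁻ ω, ENNReal.ofReal ((if u ≤ U ω then (1:ℝ) else 0) * lam u) ∂P) := by
    apply lintegral_lintegral_swap
    apply ENNReal.measurable_ofReal.comp_aemeasurable
    apply Measurable.aemeasurable
    have hSmeas : MeasurableSet {p : Ω × ℝ | p.2 ≤ U p.1} :=
      measurableSet_le measurable_snd (hUmeas.comp measurable_fst)
    exact ((measurable_const.ite hSmeas measurable_const).mul (hmeas.comp measurable_snd))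
  rw [hswap]
  -- step 3: inner over ω
  apply setLIntegral_congr_fun measurableSet_Ioc
  intro u hu
  have hu0 : 0 < u := lt_of_le_of_lt hs hu.1
  have hinner : ∫⁻ ω, ENNReal.ofReal ((if u ≤ U ω then (1:ℝ) else 0) * lam u) ∂P
      = ENNReal.ofReal (lam u) * P {ω | u ≤ U ω} := by
    have : (fun ω => ENNReal.ofReal ((if u ≤ U ω then (1:ℝ) else 0) * lam u))
        = ({ω | u ≤ U ω}).indicator (fun _ => ENNReal.ofReal (lam u)) := by
      funext ω
      by_cases h : u ≤ U ω
      · simp [h, indicator_of_mem (show ω ∈ {ω | u ≤ U ω} from h)]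
      · simp [h, indicator_of_notMem (show ω ∉ {ω | u ≤ U ω} from h)]
    rw [this, lintegral_indicator (show MeasurableSet {ω | u ≤ U ω} from hUmeas measurableSet_Ici) _, setLIntegral_const]
  dsimp only
  rw [hinner, U_tail P hTmeas hCmeas hmeas hint h0 hTC hhaz hU hu0]
  rw [← mul_assoc, ← ENNReal.ofReal_mul (h0 u)]




def upSigma {Ω : Type*} (S : Set Ω) : MeasurableSpace Ω where
  MeasurableSet' A := A ∩ S = ∅ ∨ S ⊆ A
  measurableSet_empty := Or.inl (Set.empty_inter S)
  measurableSet_compl := by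
    intro A hA
    rcases hA with h | h
    · right
      intro x hx hc
      have : x ∈ A ∩ S := ⟨hc, hx⟩
      rw [h] at this
      exact this
    · left
      ext x
      simp only [Set.mem_inter_iff, Set.mem_compl_iff, Set.mem_empty_iff_false, iff_false,
        not_and]
      intro hxA hxS
      exact hxA (h hxS)
  measurableSet_iUnion := by
    intro f hf
    by_cases hex : ∃ i, S ⊆ f i
    · obtain ⟨i, hi⟩ := hex
      exact Or.inr (hi.trans (Set.subset_iUnion f i))
    · push_neg at hex
      left
      have : ∀ i, f i ∩ S = ∅ := fun i => (hf i).resolve_right (hex i)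
      rw [Set.iUnion_inter]
      simp only [Set.iUnion_eq_empty]
      exact this

lemma measurableSet_upSigma {Ω : Type*} (S A : Set Ω) :
    MeasurableSet[upSigma S] A ↔ (A ∩ S = ∅ ∨ S ⊆ A) := Iff.rfl

end SurvivalAux

/-- The compensated counting process
`M(t) = 1{U ≤ t, δ = 1} − ∫_0^t R(s) λ(s) ds`, `t ≥ 0`, is a martingale with respect to
the observed-data filtration `F_t = σ(1{U ≤ s}, δ·1{U ≤ s} : s ≤ t)`. -/
theorem compensated_counting_process_is_martingale
    {Ω : Type*} [m0 : MeasurableSpace Ω] (P : Measure Ω) [IsProbabilityMeasure P]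
    (T C : Ω → ℝ) (hTmeas : Measurable T) (hCmeas : Measurable C)
    (hTpos : ∀ ω, 0 < T ω) (hCpos : ∀ ω, 0 < C ω)
    (hTC : IndepFun T C P)
    (lam : ℝ → ℝ) (hlam_meas : Measurable lam) (hlam_nonneg : ∀ s, 0 ≤ lam s)
    (hlam_loc : LocallyIntegrable lam MeasureTheory.volume)
    (hhaz : ∀ t : ℝ, 0 ≤ t →
      P {ω | t < T ω} = ENNReal.ofReal (Real.exp (-∫ s in (0:ℝ)..t, lam s)))
    (U : Ω → ℝ) (hU : ∀ ω, U ω = min (T ω) (C ω))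
    (M : ℝ≥0 → Ω → ℝ)
    (hM : ∀ (t : ℝ≥0) (ω : Ω), M t ω =
      (if U ω ≤ (t : ℝ) ∧ T ω ≤ C ω then (1 : ℝ) else 0)
        - ∫ s in (0:ℝ)..(t : ℝ), (if s ≤ U ω then (1 : ℝ) else 0) * lam s)
    (ℱ : Filtration ℝ≥0 m0)
    (hℱ : ∀ t : ℝ≥0, ℱ t =
      ⨆ s ∈ Set.Iic t, MeasurableSpace.comap
        (fun ω => ((if U ω ≤ (s : ℝ) then (1 : ℝ) else 0),
          (if T ω ≤ C ω ∧ U ω ≤ (s : ℝ) then (1 : ℝ) else 0)))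
        inferInstance) :
    Martingale M ℱ P := by
  classical
  have hint : ∀ a b : ℝ, IntervalIntegrable lam volume a b := fun a b =>
    (hlam_loc.integrableOn_isCompact isCompact_uIcc).intervalIntegrable
  have hUmeas : Measurable U := by
    have h : U = fun ω => min (T ω) (C ω) := funext hU
    rw [h]; exact hTmeas.min hCmeas
  have hUpos : ∀ ω, 0 < U ω := fun ω => by rw [hU]; exact lt_min (hTpos ω) (hCpos ω)
  have hFcont : Continuous (Fh lam) := intervalIntegral.continuous_primitive hint 0
  have hFmono : Monotone (Fh lam) := by
    intro x y hxy
    have h1 := intervalIntegral.integral_add_adjacent_intervals (hint 0 x) (hint x y)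
    have h2 : 0 ≤ ∫ s in x..y, lam s :=
      intervalIntegral.integral_nonneg hxy (fun z _ => hlam_nonneg z)
    simp only [Fh] at h1 ⊢; linarith
  have hF0 : Fh lam 0 = 0 := intervalIntegral.integral_same
  have hFnonneg : ∀ {r : ℝ}, 0 ≤ r → 0 ≤ Fh lam r := fun hr => by
    rw [← hF0]; exact hFmono hr
  have hindint : ∀ (ω : Ω) (a b : ℝ),
      IntervalIntegrable (fun u => (if u ≤ U ω then (1:ℝ) else 0) * lam u) volume a b := by
    intro ω a b
    have heq : (fun u => (if u ≤ U ω then (1:ℝ) else 0) * lam u)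
        = (Set.Iic (U ω)).indicator lam := by
      funext u; by_cases h : u ≤ U ω <;> simp [h, Set.indicator]
    rw [heq]
    exact ⟨(hint a b).1.indicator measurableSet_Iic, (hint b a).1.indicator measurableSet_Iic⟩
  have hArep : ∀ (r : ℝ), 0 ≤ r → ∀ ω,
      (∫ u in (0:ℝ)..r, (if u ≤ U ω then (1:ℝ) else 0) * lam u) = Fh lam (min r (U ω)) := by
    intro r hr ω
    set m := min r (U ω) with hm
    have hm0 : 0 ≤ m := le_min hr (hUpos ω).le
    have hmr : m ≤ r := min_le_left _ _
    have hsplit := intervalIntegral.integral_add_adjacent_intervals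
      (hindint ω 0 m) (hindint ω m r)
    have h1 : (∫ u in (0:ℝ)..m, (if u ≤ U ω then (1:ℝ) else 0) * lam u) = Fh lam m := by
      rw [show Fh lam m = ∫ u in (0:ℝ)..m, lam u from rfl]
      apply intervalIntegral.integral_congr
      intro u hu
      rw [Set.uIcc_of_le hm0] at hu
      have h2 : u ≤ U ω := le_trans hu.2 (min_le_right _ _)
      simp [h2]
    have h2 : (∫ u in m..r, (if u ≤ U ω then (1:ℝ) else 0) * lam u) = 0 := by
      rw [intervalIntegral.integral_of_le hmr]
      apply setIntegral_eq_zero_of_forall_eq_zero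
      intro u hu
      have hnot : ¬ u ≤ U ω := fun hc => absurd (le_min hu.2 hc) (not_le.2 hu.1)
      simp [hnot]
    rw [h1, h2] at hsplit
    linarith
  have hMrep : ∀ (t : ℝ≥0) (ω : Ω), M t ω =
      (if U ω ≤ (t:ℝ) ∧ T ω ≤ C ω then (1:ℝ) else 0) - Fh lam (min (t:ℝ) (U ω)) := by
    intro t ω
    rw [hM t ω, hArep (t:ℝ) t.coe_nonneg ω]
  -- m0-measurability and integrability
  have hMeqn : ∀ t : ℝ≥0, M t = fun ω =>
      (if U ω ≤ (t:ℝ) ∧ T ω ≤ C ω then (1:ℝ) else 0) - Fh lam (min (t:ℝ) (U ω)) :=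
    fun t => funext (hMrep t)
  have hcondm : ∀ t : ℝ≥0, MeasurableSet {ω | U ω ≤ (t:ℝ) ∧ T ω ≤ C ω} := by
    intro t
    rw [Set.setOf_and]
    exact (hUmeas measurableSet_Iic).inter (measurableSet_le hTmeas hCmeas)
  have hMmeas : ∀ t : ℝ≥0, Measurable (M t) := by
    intro t
    rw [hMeqn t]
    apply Measurable.sub
    · exact Measurable.ite (hcondm t) measurable_const measurable_const
    · exact hFcont.measurable.comp (measurable_const.min hUmeas)
  have hMint : ∀ t : ℝ≥0, Integrable (M t) P := by
    intro t
    apply Integrable.mono' (integrable_const (1 + Fh lam t)) (hMmeas t).aestronglyMeasurable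
    apply Filter.Eventually.of_forall
    intro ω
    rw [hMrep t ω]
    have h1 : 0 ≤ Fh lam (min (t:ℝ) (U ω)) := hFnonneg (le_min t.coe_nonneg (hUpos ω).le)
    have h2 : Fh lam (min (t:ℝ) (U ω)) ≤ Fh lam t := hFmono (min_le_left _ _)
    have h3 : (0:ℝ) ≤ (if U ω ≤ (t:ℝ) ∧ T ω ≤ C ω then (1:ℝ) else 0) ∧
        (if U ω ≤ (t:ℝ) ∧ T ω ≤ C ω then (1:ℝ) else 0) ≤ 1 := by
      by_cases h : U ω ≤ (t:ℝ) ∧ T ω ≤ C ω <;> simp [h]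
    rw [Real.norm_eq_abs, abs_le]
    constructor <;> linarith [h3.1, h3.2]
  -- ℱ-measurability
  have hcomap_le : ∀ (t r : ℝ≥0), r ≤ t →
      MeasurableSpace.comap (fun ω => ((if U ω ≤ (r:ℝ) then (1:ℝ) else 0),
        (if T ω ≤ C ω ∧ U ω ≤ (r:ℝ) then (1:ℝ) else 0))) inferInstance ≤ ℱ t := by
    intro t r hr
    rw [hℱ t]
    exact le_iSup₂ (f := fun (s : ℝ≥0) (_ : s ∈ Set.Iic t) => MeasurableSpace.comap
      (fun ω => ((if U ω ≤ (s:ℝ) then (1:ℝ) else 0),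
        (if T ω ≤ C ω ∧ U ω ≤ (s:ℝ) then (1:ℝ) else 0))) inferInstance) r hr
  have hUevent : ∀ (t : ℝ≥0) (c : ℝ), c ≤ (t:ℝ) → MeasurableSet[ℱ t] {ω | U ω ≤ c} := by
    intro t c hc
    rcases lt_or_ge c 0 with hneg | hpos
    · have h : {ω | U ω ≤ c} = ∅ :=
        Set.eq_empty_of_forall_notMem (fun ω h =>
          absurd h (not_le.2 (lt_of_lt_of_le hneg (hUpos ω).le)))
      rw [h]
      exact @MeasurableSet.empty _ (ℱ t)
    · set r : ℝ≥0 := ⟨c, hpos⟩ with hrdef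
      have hrt : r ≤ t := by rw [← NNReal.coe_le_coe]; exact hc
      apply hcomap_le t r hrt
      refine ⟨{p : ℝ × ℝ | p.1 = 1}, measurable_fst (measurableSet_singleton 1), ?_⟩
      ext ω
      simp only [Set.mem_preimage, Set.mem_setOf_eq]
      by_cases h : U ω ≤ c
      · simp [hrdef, h]; exact h
      · simp [hrdef, h]; exact not_le.1 h
  have hDevent : ∀ t : ℝ≥0, MeasurableSet[ℱ t] {ω | U ω ≤ (t:ℝ) ∧ T ω ≤ C ω} := by
    intro t
    apply hcomap_le t t le_rfl
    refine ⟨{p : ℝ × ℝ | p.2 = 1}, measurable_snd (measurableSet_singleton 1), ?_⟩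
    ext ω
    simp only [Set.mem_preimage, Set.mem_setOf_eq]
    by_cases h1 : T ω ≤ C ω <;> by_cases h2 : U ω ≤ (t:ℝ) <;> simp [h1, h2]
  have hminF : ∀ t : ℝ≥0, Measurable[ℱ t] (fun ω => min (t:ℝ) (U ω)) := by
    intro t
    apply measurable_of_Iic
    intro c
    by_cases hc : (t:ℝ) ≤ c
    · have h : (fun ω => min (t:ℝ) (U ω)) ⁻¹' Set.Iic c = Set.univ :=
        Set.eq_univ_of_forall (fun ω => by
          simp only [Set.mem_preimage, Set.mem_Iic]
          exact le_trans (min_le_left _ _) hc)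
      rw [h]
      exact @MeasurableSet.univ _ (ℱ t)
    · push_neg at hc
      have h : (fun ω => min (t:ℝ) (U ω)) ⁻¹' Set.Iic c = {ω | U ω ≤ c} := by
        ext ω
        simp only [Set.mem_preimage, Set.mem_Iic, min_le_iff, Set.mem_setOf_eq]
        constructor
        · rintro (h | h)
          · exact absurd h (not_le.2 hc)
          · exact h
        · exact fun h => Or.inr h
      rw [h]
      exact hUevent t c hc.le
  have hAdapted : StronglyAdapted ℱ M := by
    intro t
    rw [hMeqn t]
    apply Measurable.stronglyMeasurable
    apply Measurable.sub
    · have h : (fun ω => if U ω ≤ (t:ℝ) ∧ T ω ≤ C ω then (1:ℝ) else 0)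
          = ({ω | U ω ≤ (t:ℝ) ∧ T ω ≤ C ω}).indicator (fun _ => (1:ℝ)) := by
        funext ω
        by_cases h : U ω ≤ (t:ℝ) ∧ T ω ≤ C ω <;> simp [h, Set.indicator]
      rw [h]
      exact measurable_const.indicator (hDevent t)
    · exact hFcont.measurable.comp (hminF t)
  -- mean-zero increments
  have hmean : ∀ i j : ℝ≥0, i ≤ j → ∫ ω, (M j ω - M i ω) ∂P = 0 := by
    intro i j hij
    have hijR : (i:ℝ) ≤ (j:ℝ) := NNReal.coe_le_coe.2 hij
    set Est := {ω | T ω ≤ C ω ∧ (i:ℝ) < T ω ∧ T ω ≤ (j:ℝ)} with hEst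
    have hEstm : MeasurableSet Est := by
      rw [hEst, Set.setOf_and, Set.setOf_and]
      exact (measurableSet_le hTmeas hCmeas).inter
        ((measurableSet_lt measurable_const hTmeas).inter
          (measurableSet_le hTmeas measurable_const))
    have hDrep : (fun ω => M j ω - M i ω) = fun ω =>
        Est.indicator (fun _ => (1:ℝ)) ω
          - (∫ u in (i:ℝ)..(j:ℝ), (if u ≤ U ω then (1:ℝ) else 0) * lam u) := by
      funext ω
      rw [hM j ω, hM i ω, sub_sub_sub_comm]
      have hN : (if U ω ≤ (j:ℝ) ∧ T ω ≤ C ω then (1:ℝ) else 0)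
          - (if U ω ≤ (i:ℝ) ∧ T ω ≤ C ω then (1:ℝ) else 0)
          = Est.indicator (fun _ => (1:ℝ)) ω := by
        by_cases hδ : T ω ≤ C ω
        · have hUT : U ω = T ω := by rw [hU ω]; exact min_eq_left hδ
          by_cases h1 : T ω ≤ (i:ℝ)
          · have h2 : T ω ≤ (j:ℝ) := le_trans h1 hijR
            have hni : ω ∉ Est := fun hc => absurd hc.2.1 (not_lt.2 h1)
            simp [hUT, h1, h2, hδ, Set.indicator_of_notMem hni]
          · by_cases h2 : T ω ≤ (j:ℝ)
            · have hmem : ω ∈ Est := ⟨hδ, not_le.1 h1, h2⟩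
              simp [hUT, h1, h2, hδ, Set.indicator_of_mem hmem]
            · have hni : ω ∉ Est := fun hc => h2 hc.2.2
              have h1' : ¬ T ω ≤ (i:ℝ) := h1
              simp [hUT, h1', h2, hδ, Set.indicator_of_notMem hni]
        · have hni : ω ∉ Est := fun hc => hδ hc.1
          simp [hδ, Set.indicator_of_notMem hni]
      have hA : (∫ u in (0:ℝ)..(j:ℝ), (if u ≤ U ω then (1:ℝ) else 0) * lam u)
          - (∫ u in (0:ℝ)..(i:ℝ), (if u ≤ U ω then (1:ℝ) else 0) * lam u)
          = ∫ u in (i:ℝ)..(j:ℝ), (if u ≤ U ω then (1:ℝ) else 0) * lam u := by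
        have h := intervalIntegral.integral_add_adjacent_intervals
          (hindint ω 0 (i:ℝ)) (hindint ω (i:ℝ) (j:ℝ))
        linarith
      rw [hN, hA]
    have hAdrep : (fun ω => ∫ u in (i:ℝ)..(j:ℝ), (if u ≤ U ω then (1:ℝ) else 0) * lam u)
        = fun ω => Fh lam (min (j:ℝ) (U ω)) - Fh lam (min (i:ℝ) (U ω)) := by
      funext ω
      have hadj := intervalIntegral.integral_add_adjacent_intervals
        (hindint ω 0 (i:ℝ)) (hindint ω (i:ℝ) (j:ℝ))
      have e1 := hArep (j:ℝ) j.coe_nonneg ω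
      have e2 := hArep (i:ℝ) i.coe_nonneg ω
      linarith
    have hAmeas : Measurable (fun ω => Fh lam (min (j:ℝ) (U ω)) - Fh lam (min (i:ℝ) (U ω))) :=
      (hFcont.measurable.comp (measurable_const.min hUmeas)).sub
        (hFcont.measurable.comp (measurable_const.min hUmeas))
    have hA0 : ∀ ω, 0 ≤ ∫ u in (i:ℝ)..(j:ℝ), (if u ≤ U ω then (1:ℝ) else 0) * lam u := by
      intro ω
      apply intervalIntegral.integral_nonneg hijR
      intro u _
      by_cases h : u ≤ U ω <;> simp [h, hlam_nonneg u]
    have hAint : Integrable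
        (fun ω => ∫ u in (i:ℝ)..(j:ℝ), (if u ≤ U ω then (1:ℝ) else 0) * lam u) P := by
      rw [hAdrep]
      apply Integrable.mono' (integrable_const (Fh lam j)) hAmeas.aestronglyMeasurable
      apply Filter.Eventually.of_forall
      intro ω
      have hmm : min (i:ℝ) (U ω) ≤ min (j:ℝ) (U ω) := min_le_min hijR le_rfl
      have h1 : 0 ≤ Fh lam (min (i:ℝ) (U ω)) := hFnonneg (le_min i.coe_nonneg (hUpos ω).le)
      have h2 : Fh lam (min (j:ℝ) (U ω)) ≤ Fh lam j := hFmono (min_le_left _ _)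
      rw [Real.norm_eq_abs, abs_of_nonneg (sub_nonneg.2 (hFmono hmm))]
      linarith
    have hIndInt : Integrable (Est.indicator (fun _ => (1:ℝ))) P :=
      (integrable_const (1:ℝ)).indicator hEstm
    rw [hDrep, integral_sub hIndInt hAint, integral_indicator_const (1:ℝ) hEstm, measureReal_def]
    have hAeq : ∫ ω, (∫ u in (i:ℝ)..(j:ℝ), (if u ≤ U ω then (1:ℝ) else 0) * lam u) ∂P
        = (∫⁻ ω, ENNReal.ofReal
            (∫ u in (i:ℝ)..(j:ℝ), (if u ≤ U ω then (1:ℝ) else 0) * lam u) ∂P).toReal := by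
      rw [integral_eq_lintegral_of_nonneg_ae (Filter.Eventually.of_forall hA0)
        (by rw [hAdrep]; exact hAmeas.aestronglyMeasurable)]
    rw [hAeq,
      A_incr P hTmeas hCmeas hlam_meas hint hlam_nonneg hTC hhaz hU i.coe_nonneg hijR,
      show P Est = ∫⁻ u in Set.Ioc (i:ℝ) (j:ℝ),
          ENNReal.ofReal (lam u * Real.exp (-(Fh lam u))) * (P.map C) (Set.Ici u) from
        N_incr P hTmeas hCmeas hlam_meas hint hlam_nonneg hTC hhaz i.coe_nonneg hijR]
    simp
  -- set-integral equality
  have hsetint : ∀ (i j : ℝ≥0), i ≤ j → ∀ A : Set Ω, MeasurableSet[ℱ i] A →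
      ∫ ω in A, M i ω ∂P = ∫ ω in A, M j ω ∂P := by
    intro i j hij A hA
    have hijR : (i:ℝ) ≤ (j:ℝ) := NNReal.coe_le_coe.2 hij
    set S := {ω | (i:ℝ) < U ω} with hS
    have hSm : MeasurableSet S := hUmeas measurableSet_Ioi
    have hupS : (ℱ i) ≤ upSigma S := by
      refine (hℱ i).le.trans ?_
      apply iSup₂_le
      intro r hr
      intro A' hA'
      obtain ⟨B, hB, rfl⟩ := hA'
      have hrc : (r:ℝ) ≤ (i:ℝ) := NNReal.coe_le_coe.2 hr
      refine (measurableSet_upSigma _ _).2 ?_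
      by_cases h00 : ((0:ℝ), (0:ℝ)) ∈ B
      · right
        intro ω hω
        have h1 : ¬ U ω ≤ (r:ℝ) := not_le.2 (lt_of_le_of_lt hrc hω)
        have h2 : ¬ (T ω ≤ C ω ∧ U ω ≤ (r:ℝ)) := fun hc => h1 hc.2
        show ω ∈ _ ⁻¹' B
        simp only [Set.mem_preimage, if_neg h1, if_neg h2]
        exact h00
      · left
        ext ω
        simp only [Set.mem_inter_iff, Set.mem_preimage, Set.mem_empty_iff_false, iff_false,
          not_and]
        intro hωA hωS
        have h1 : ¬ U ω ≤ (r:ℝ) := not_le.2 (lt_of_le_of_lt hrc hωS)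
        have h2 : ¬ (T ω ≤ C ω ∧ U ω ≤ (r:ℝ)) := fun hc => h1 hc.2
        rw [if_neg h1, if_neg h2] at hωA
        exact h00 hωA
    have hD0 : ∀ ω, U ω ≤ (i:ℝ) → M j ω - M i ω = 0 := by
      intro ω hωU
      rw [hMrep j ω, hMrep i ω]
      have hUj : U ω ≤ (j:ℝ) := le_trans hωU hijR
      rw [min_eq_right hUj, min_eq_right hωU]
      have h : (if U ω ≤ (j:ℝ) ∧ T ω ≤ C ω then (1:ℝ) else 0)
          = (if U ω ≤ (i:ℝ) ∧ T ω ≤ C ω then (1:ℝ) else 0) :=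
        if_congr ⟨fun h => ⟨hωU, h.2⟩, fun h => ⟨hUj, h.2⟩⟩ rfl rfl
      rw [h]
      ring
    have hsub : ∫ ω in A, (M j ω - M i ω) ∂P
        = (∫ ω in A, M j ω ∂P) - ∫ ω in A, M i ω ∂P :=
      integral_sub ((hMint j).integrableOn) ((hMint i).integrableOn)
    rcases (measurableSet_upSigma S A).1 (hupS A hA) with hcase | hcase
    · have hzero : ∫ ω in A, (M j ω - M i ω) ∂P = 0 := by
        apply setIntegral_eq_zero_of_forall_eq_zero
        intro ω hω
        apply hD0
        by_contra hc
        push_neg at hc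
        exact Set.eq_empty_iff_forall_notMem.1 hcase ω ⟨hω, hc⟩
      linarith
    · have hDind : (fun ω => M j ω - M i ω) = S.indicator (fun ω => M j ω - M i ω) := by
        funext ω
        by_cases hω : ω ∈ S
        · rw [Set.indicator_of_mem hω]
        · rw [Set.indicator_of_notMem hω]
          exact hD0 ω (not_lt.1 hω)
      have hzero : ∫ ω in A, (M j ω - M i ω) ∂P = ∫ ω, (M j ω - M i ω) ∂P := by
        calc ∫ ω in A, (M j ω - M i ω) ∂P
            = ∫ ω in A, S.indicator (fun ω => M j ω - M i ω) ω ∂P := by rw [← hDind]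
          _ = ∫ ω in A ∩ S, (M j ω - M i ω) ∂P := setIntegral_indicator hSm
          _ = ∫ ω in S, (M j ω - M i ω) ∂P := by
              rw [Set.inter_eq_self_of_subset_right hcase]
          _ = ∫ ω, S.indicator (fun ω => M j ω - M i ω) ω ∂P := (integral_indicator hSm).symm
          _ = ∫ ω, (M j ω - M i ω) ∂P := by rw [← hDind]
      have hm := hmean i j hij
      linarith
  refine ⟨hAdapted, fun i j hij => ?_⟩
  exact (ae_eq_condExp_of_forall_setIntegral_eq (ℱ.le i) (hMint j)
    (fun A hA hAfin => (hMint i).integrableOn)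
    (fun A hA hAfin => hsetint i j hij A hA)
    (StronglyMeasurable.aestronglyMeasurable (hAdapted i))).symm
end

section
/- For every bounded measurable function h : [0,∞) → ℝ, E[h(U) δ 1{U ≤ τ}] = E[∫_0^τ h(s) R(s) λ(s) ds]; that is, the counting-process increment dN(t) = d1{U ≤ t, δ = 1} and its compensator R(t)λ(t)dt agree in expectation against deterministic integrands, which is the identity underlying the unbiasedness of counting-process score functions. -/
open MeasureTheory ProbabilityTheory Real
open Set

lemma lam_intervalIntegrable {lam : ℝ → ℝ} (hloc : LocallyIntegrable lam volume)
    (x y : ℝ) : IntervalIntegrable lam volume x y :=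
  intervalIntegrable_iff.2
    ((hloc.integrableOn_isCompact isCompact_uIcc).mono_set Set.Ioc_subset_Icc_self)

lemma exp_neg_FTC (lam : ℝ → ℝ)
    (hnn : ∀ s, 0 ≤ lam s) (hloc : LocallyIntegrable lam volume)
    {a b : ℝ} (ha : 0 ≤ a) (hab : a ≤ b) :
    ∫ s in a..b, lam s * Real.exp (-∫ u in (0:ℝ)..s, lam u)
      = Real.exp (-∫ u in (0:ℝ)..a, lam u) - Real.exp (-∫ u in (0:ℝ)..b, lam u) := by
  set L : ℝ → ℝ := fun t => ∫ u in (0:ℝ)..t, lam u with hLdef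
  have h_ii : ∀ x y : ℝ, IntervalIntegrable lam volume x y := lam_intervalIntegrable hloc
  have hL_cont : Continuous L := intervalIntegral.continuous_primitive (fun x y => h_ii x y) 0
  have hE_cont : Continuous fun t => Real.exp (-(L t)) :=
    Real.continuous_exp.comp hL_cont.neg
  have hLadd : ∀ x y : ℝ, L y - L x = ∫ u in x..y, lam u := by
    intro x y
    have := intervalIntegral.integral_add_adjacent_intervals (h_ii 0 x) (h_ii x y)
    simp only [hLdef]; linarith [this]
  have hL_mono : Monotone L := by
    intro x y hxy
    have h0 : 0 ≤ ∫ u in x..y, lam u :=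
      intervalIntegral.integral_nonneg hxy (fun u _ => hnn u)
    have := hLadd x y; linarith
  have hL0 : L 0 = 0 := by simp [hLdef]
  have h_gii : ∀ x y : ℝ, IntervalIntegrable (fun s => lam s * Real.exp (-(L s))) volume x y := by
    intro x y
    exact intervalIntegrable_iff.2
      (((hloc.integrableOn_isCompact isCompact_uIcc).mul_continuousOn
        (hE_cont.continuousOn) isCompact_uIcc).mono_set Set.Ioc_subset_Icc_self)
  -- key second-order estimate
  have key : ∀ s t : ℝ, 0 ≤ s → s ≤ t →
      |(Real.exp (-(L s)) - Real.exp (-(L t))) - ∫ u in s..t, lam u * Real.exp (-(L u))|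
        ≤ (L t - L s) ^ 2 := by
    intro s t hs hst
    set Δ : ℝ := L t - L s with hΔdef
    have hΔ0 : 0 ≤ Δ := sub_nonneg.2 (hL_mono hst)
    have hint : ∫ u in s..t, lam u = Δ := (hLadd s t).symm
    -- integral bounds
    have hIle : ∫ u in s..t, lam u * Real.exp (-(L u)) ≤ Δ * Real.exp (-(L s)) := by
      have h1 : ∫ u in s..t, lam u * Real.exp (-(L u))
          ≤ ∫ u in s..t, lam u * Real.exp (-(L s)) := by
        apply intervalIntegral.integral_mono_on hst (h_gii s t) ((h_ii s t).mul_const _)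
        intro u hu
        exact mul_le_mul_of_nonneg_left
          (Real.exp_le_exp.2 (neg_le_neg (hL_mono hu.1))) (hnn u)
      rwa [intervalIntegral.integral_mul_const, hint, hΔdef] at h1
    have hIge : Δ * Real.exp (-(L t)) ≤ ∫ u in s..t, lam u * Real.exp (-(L u)) := by
      have h1 : ∫ u in s..t, lam u * Real.exp (-(L t))
          ≤ ∫ u in s..t, lam u * Real.exp (-(L u)) := by
        apply intervalIntegral.integral_mono_on hst ((h_ii s t).mul_const _) (h_gii s t)
        intro u hu
        exact mul_le_mul_of_nonneg_left
          (Real.exp_le_exp.2 (neg_le_neg (hL_mono hu.2))) (hnn u)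
      rwa [intervalIntegral.integral_mul_const, hint, hΔdef] at h1
    -- difference bounds
    have hLt : L t = L s + Δ := by rw [hΔdef]; ring
    have hexp1 : Real.exp (-Δ) * Real.exp Δ = 1 := by
      rw [← Real.exp_add]; simp
    have hDle : Real.exp (-(L s)) - Real.exp (-(L t)) ≤ Δ * Real.exp (-(L s)) := by
      rw [hLt, neg_add, Real.exp_add]
      have h2 : -Δ + 1 ≤ Real.exp (-Δ) := Real.add_one_le_exp (-Δ)
      nlinarith [Real.exp_pos (-(L s))]
    have hDge : Δ * Real.exp (-(L t)) ≤ Real.exp (-(L s)) - Real.exp (-(L t)) := by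
      rw [hLt, neg_add, Real.exp_add]
      have h2 : Δ + 1 ≤ Real.exp Δ := Real.add_one_le_exp Δ
      have h3 := mul_le_mul_of_nonneg_left h2 (Real.exp_pos (-Δ)).le
      nlinarith [Real.exp_pos (-(L s)), Real.exp_pos (-Δ), hexp1]
    have hEle1 : Real.exp (-(L s)) ≤ 1 := by
      rw [show (1:ℝ) = Real.exp 0 by simp]
      apply Real.exp_le_exp.2
      have : (0:ℝ) ≤ L s := by
        have := hL_mono hs; rw [hL0] at this; exact this
      linarith
    have hEd : Real.exp (-(L s)) - Real.exp (-(L t)) ≤ Δ := by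
      nlinarith
    rw [abs_le]
    constructor
    · nlinarith [hIle, hDge]
    · nlinarith [hIge, hDle]
  -- the primitive of the integrand
  set g : ℝ → ℝ := fun t => ∫ u in a..t, lam u * Real.exp (-(L u)) with hgdef
  have hg_cont : Continuous g := intervalIntegral.continuous_primitive (fun x y => h_gii x y) a
  set φ : ℝ → ℝ := fun t => |(Real.exp (-(L a)) - Real.exp (-(L t))) - g t| with hφdef
  have hφ_cont : Continuous φ := by
    apply Continuous.abs
    exact (continuous_const.sub hE_cont).sub hg_cont
  have main : ∀ ε : ℝ, 0 < ε → φ b ≤ ε * (L b - L a) := by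
    intro ε hε
    set S : Set ℝ := Set.Icc a b ∩ {t | φ t ≤ ε * (L t - L a)} with hSdef
    have haS : a ∈ S := by
      constructor
      · exact ⟨le_refl a, hab⟩
      · simp only [Set.mem_setOf_eq, hφdef, hgdef]
        rw [intervalIntegral.integral_same]
        simp
    have hS_bdd : BddAbove S := ⟨b, fun x hx => hx.1.2⟩
    have hS_closed : IsClosed S := by
      apply IsClosed.inter isClosed_Icc
      exact isClosed_le hφ_cont (by fun_prop)
    have hc_mem : sSup S ∈ S := hS_closed.csSup_mem ⟨a, haS⟩ hS_bdd
    set c : ℝ := sSup S with hcdef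
    by_cases hcb : b ≤ c
    · have hcb' : c = b := le_antisymm hc_mem.1.2 hcb
      have := hc_mem.2
      rw [hcb'] at this
      exact this
    · exfalso
      push_neg at hcb
      -- find d in (c, b] with L d - L c ≤ ε
      obtain ⟨δ, hδ0, hδ⟩ := Metric.continuous_iff.mp hL_cont c ε hε
      set d : ℝ := min b (c + δ / 2) with hddef
      have hcd : c < d := lt_min hcb (by linarith)
      have hdb : d ≤ b := min_le_left _ _
      have hdist : dist d c < δ := by
        rw [Real.dist_eq, abs_of_pos (by linarith : (0:ℝ) < d - c)]
        have : d ≤ c + δ / 2 := min_le_right _ _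
        linarith
      have hLdc : L d - L c ≤ ε := by
        have := hδ d hdist
        rw [Real.dist_eq] at this
        have h2 := abs_lt.mp this
        linarith [h2.2]
      have hac : a ≤ c := hc_mem.1.1
      have hdS : d ∈ S := by
        constructor
        · exact ⟨le_trans hac hcd.le, hdb⟩
        · simp only [Set.mem_setOf_eq]
          have hsplit : g d = g c + ∫ u in c..d, lam u * Real.exp (-(L u)) := by
            rw [hgdef]
            have := intervalIntegral.integral_add_adjacent_intervals (h_gii a c) (h_gii c d)
            simp only []; linarith [this]
          have hkey := key c d (le_trans ha hac) hcd.le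
          have hφc := hc_mem.2
          have hΔcd0 : 0 ≤ L d - L c := sub_nonneg.2 (hL_mono hcd.le)
          have h2 : (L d - L c)^2 ≤ ε * (L d - L c) := by nlinarith
          have htri : φ d ≤ φ c + |(Real.exp (-(L c)) - Real.exp (-(L d)))
              - ∫ u in c..d, lam u * Real.exp (-(L u))| := by
            simp only [hφdef]
            rw [hsplit]
            have : (Real.exp (-(L a)) - Real.exp (-(L d)))
                - (g c + ∫ u in c..d, lam u * Real.exp (-(L u)))
              = ((Real.exp (-(L a)) - Real.exp (-(L c))) - g c)
                + ((Real.exp (-(L c)) - Real.exp (-(L d)))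
                  - ∫ u in c..d, lam u * Real.exp (-(L u))) := by ring
            rw [this]
            exact abs_add_le _ _
          have hφc' : φ c ≤ ε * (L c - L a) := hφc
          calc φ d ≤ φ c + |(Real.exp (-(L c)) - Real.exp (-(L d)))
              - ∫ u in c..d, lam u * Real.exp (-(L u))| := htri
            _ ≤ ε * (L c - L a) + (L d - L c)^2 := add_le_add hφc' hkey
            _ ≤ ε * (L c - L a) + ε * (L d - L c) := by linarith
            _ = ε * (L d - L a) := by ring
      have := le_csSup hS_bdd hdS
      rw [← hcdef] at this
      linarith
  -- conclude
  have hφb0 : φ b = 0 := by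
    have hK : 0 ≤ L b - L a := sub_nonneg.2 (hL_mono hab)
    have h1 : φ b ≤ 0 := by
      apply le_of_forall_pos_le_add
      intro ε hε
      have := main (ε / (L b - L a + 1)) (by positivity)
      calc φ b ≤ ε / (L b - L a + 1) * (L b - L a) := this
        _ ≤ ε := by
          rw [div_mul_eq_mul_div, div_le_iff₀ (by linarith)]
          nlinarith
        _ ≤ 0 + ε := by linarith
    exact le_antisymm h1 (abs_nonneg _)
  have := abs_eq_zero.mp hφb0
  have h2 : Real.exp (-(L a)) - Real.exp (-(L b)) = g b := by linarith [sub_eq_zero.mp this]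
  rw [hgdef] at h2
  simp only [hLdef] at h2 ⊢
  linarith [h2]

/-- For every bounded measurable `h : [0,∞) → ℝ`,
`E[h(U) δ 1{U ≤ τ}] = E[∫_0^τ h(s) R(s) λ(s) ds]`;
the counting-process increment and its compensator agree in expectation against
deterministic integrands. -/
theorem counting_increment_matches_compensator_in_expectation
    {Ω : Type*} [m0 : MeasurableSpace Ω] (P : Measure Ω) [IsProbabilityMeasure P]
    (T C : Ω → ℝ) (hTmeas : Measurable T) (hCmeas : Measurable C)
    (hTpos : ∀ ω, 0 < T ω) (hCpos : ∀ ω, 0 < C ω)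
    (hTC : IndepFun T C P)
    (lam : ℝ → ℝ) (hlam_meas : Measurable lam) (hlam_nonneg : ∀ s, 0 ≤ lam s)
    (hlam_loc : LocallyIntegrable lam MeasureTheory.volume)
    (hhaz : ∀ t : ℝ, 0 ≤ t →
      P {ω | t < T ω} = ENNReal.ofReal (Real.exp (-∫ s in (0:ℝ)..t, lam s)))
    (U : Ω → ℝ) (hU : ∀ ω, U ω = min (T ω) (C ω))
    (τ : ℝ) (hτ : 0 < τ)
    (h : ℝ → ℝ) (hh_meas : Measurable h) (hh_bdd : ∃ Mb : ℝ, ∀ x, |h x| ≤ Mb) :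
    ∫ ω, (if T ω ≤ C ω ∧ U ω ≤ τ then h (U ω) else 0) ∂P
      = ∫ ω, (∫ s in (0:ℝ)..τ, h s * ((if s ≤ U ω then (1 : ℝ) else 0) * lam s)) ∂P := by
  obtain ⟨M, hM⟩ := hh_bdd
  have hM0 : 0 ≤ M := le_trans (abs_nonneg _) (hM 0)
  set L : ℝ → ℝ := fun t => ∫ u in (0:ℝ)..t, lam u with hLdef
  set E : ℝ → ℝ := fun t => Real.exp (-(L t)) with hEdef
  have h_ii : ∀ x y : ℝ, IntervalIntegrable lam volume x y := lam_intervalIntegrable hlam_loc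
  have hL_cont : Continuous L := intervalIntegral.continuous_primitive (fun x y => h_ii x y) 0
  have hE_cont : Continuous E := Real.continuous_exp.comp hL_cont.neg
  have hE_meas : Measurable E := hE_cont.measurable
  have hE_pos : ∀ t, 0 < E t := fun t => Real.exp_pos _
  have hU_meas : Measurable U := by
    have : U = fun ω => min (T ω) (C ω) := funext hU
    rw [this]; exact hTmeas.min hCmeas
  set μT : Measure ℝ := P.map T with hμTdef
  set μC : Measure ℝ := P.map C with hμCdef
  have instT : IsProbabilityMeasure μT := Measure.isProbabilityMeasure_map hTmeas.aemeasurable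
  have instC : IsProbabilityMeasure μC := Measure.isProbabilityMeasure_map hCmeas.aemeasurable
  have hhaz' : ∀ t : ℝ, 0 ≤ t → P {ω | t < T ω} = ENNReal.ofReal (E t) := fun t ht =>
    hhaz t ht
  have hμT_Ioi : ∀ t : ℝ, 0 ≤ t → μT (Set.Ioi t) = ENNReal.ofReal (E t) := by
    intro t ht
    rw [hμTdef, Measure.map_apply hTmeas measurableSet_Ioi]
    exact hhaz' t ht
  have hμT_Iic0 : μT (Set.Iic 0) = 0 := by
    rw [hμTdef, Measure.map_apply hTmeas measurableSet_Iic]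
    have : T ⁻¹' Set.Iic 0 = ∅ := by
      ext ω; simp only [Set.mem_preimage, Set.mem_Iic, Set.mem_empty_iff_false, iff_false,
        not_le]
      exact hTpos ω
    rw [this]; exact measure_empty
  have hμT_Ioc : ∀ a b : ℝ, 0 ≤ a → a ≤ b → μT (Set.Ioc a b) = ENNReal.ofReal (E a - E b) := by
    intro a b ha0 hab
    have hsub : Set.Ioi b ⊆ Set.Ioi a := Set.Ioi_subset_Ioi hab
    rw [← Set.Ioi_diff_Ioi,
      measure_diff hsub measurableSet_Ioi.nullMeasurableSet (measure_ne_top μT _),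
      hμT_Ioi a ha0, hμT_Ioi b (le_trans ha0 hab),
      ENNReal.ofReal_sub _ (hE_pos b).le]
  -- density measure
  set dens : ℝ → NNReal := fun s => Real.toNNReal (lam s * E s) with hdensdef
  have hdens_meas : Measurable dens := (hlam_meas.mul hE_meas).real_toNNReal
  set ν : Measure ℝ := volume.withDensity (fun s => (dens s : ENNReal)) with hνdef
  have h_gii : ∀ x y : ℝ, IntervalIntegrable (fun s => lam s * E s) volume x y := by
    intro x y
    exact intervalIntegrable_iff.2
      (((hlam_loc.integrableOn_isCompact isCompact_uIcc).mul_continuousOn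
        hE_cont.continuousOn isCompact_uIcc).mono_set Set.Ioc_subset_Icc_self)
  have h_int_on : ∀ a b : ℝ, a ≤ b → IntegrableOn (fun s => lam s * E s) (Set.Ioc a b) volume :=
    fun a b hab => by
      have := intervalIntegrable_iff.mp (h_gii a b)
      rwa [Set.uIoc_of_le hab] at this
  have hν_Ioc : ∀ a b : ℝ, 0 ≤ a → a ≤ b → ν (Set.Ioc a b) = ENNReal.ofReal (E a - E b) := by
    intro a b ha0 hab
    rw [hνdef, withDensity_apply _ measurableSet_Ioc]
    have h1 : ∀ s, ((dens s : ENNReal)) = ENNReal.ofReal (lam s * E s) := fun s => rfl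
    calc ∫⁻ s in Set.Ioc a b, (dens s : ENNReal) ∂volume
        = ∫⁻ s in Set.Ioc a b, ENNReal.ofReal (lam s * E s) ∂volume := by
          simp_rw [h1]
      _ = ENNReal.ofReal (∫ s in Set.Ioc a b, lam s * E s ∂volume) :=
          (ofReal_integral_eq_lintegral_ofReal (h_int_on a b hab)
            (Filter.Eventually.of_forall fun s =>
              mul_nonneg (hlam_nonneg s) (hE_pos s).le)).symm
      _ = ENNReal.ofReal (E a - E b) := by
          rw [← intervalIntegral.integral_of_le hab]
          congr 1
          exact exp_neg_FTC lam hlam_nonneg hlam_loc ha0 hab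
  have hrest : μT.restrict (Set.Ioc 0 τ) = ν.restrict (Set.Ioc 0 τ) := by
    apply Measure.ext_of_Ioc_finite
    · rw [Measure.restrict_apply_univ, Measure.restrict_apply_univ,
        hμT_Ioc 0 τ le_rfl hτ.le, hν_Ioc 0 τ le_rfl hτ.le]
    · intro x y hxy
      rw [Measure.restrict_apply measurableSet_Ioc, Measure.restrict_apply measurableSet_Ioc,
        Set.Ioc_inter_Ioc]
      rcases le_or_gt (x ⊔ 0) (y ⊓ τ) with hle | hlt
      · rw [hμT_Ioc _ _ (le_max_right _ _) hle, hν_Ioc _ _ (le_max_right _ _) hle]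
      · rw [Set.Ioc_eq_empty (not_lt.mpr hlt.le)]
        simp
  -- survival probabilities
  have hT_Ici : ∀ s : ℝ, 0 < s → P (T ⁻¹' Set.Ici s) = ENNReal.ofReal (E s) := by
    intro s hs
    apply le_antisymm
    · apply ENNReal.le_of_forall_pos_le_add
      intro ε hε _
      have hεR : (0:ℝ) < (ε : ℝ) := hε
      obtain ⟨δ, hδ0, hδ⟩ := Metric.continuous_iff.mp hE_cont s (ε : ℝ) hεR
      set m : ℝ := min (δ / 2) (s / 2) with hm
      have hm0 : 0 < m := lt_min (by linarith) (by linarith)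
      have hmδ : m ≤ δ / 2 := min_le_left _ _
      have hms : m ≤ s / 2 := min_le_right _ _
      set t : ℝ := s - m with ht
      have ht0 : 0 ≤ t := by rw [ht]; linarith
      have hts : t < s := by rw [ht]; linarith
      have hdist : dist t s < δ := by
        rw [Real.dist_eq, ht, abs_of_nonpos (by linarith : s - m - s ≤ 0)]
        ring_nf; linarith
      have hEt : E t ≤ E s + (ε : ℝ) := by
        have h1 := hδ t hdist
        rw [Real.dist_eq] at h1
        have h2 := abs_lt.mp h1
        linarith [h2.2]
      calc P (T ⁻¹' Set.Ici s) ≤ P {ω | t < T ω} :=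
            measure_mono (fun ω hω => lt_of_lt_of_le hts hω)
        _ = ENNReal.ofReal (E t) := hhaz' t ht0
        _ ≤ ENNReal.ofReal (E s + (ε : ℝ)) := ENNReal.ofReal_le_ofReal hEt
        _ = ENNReal.ofReal (E s) + ENNReal.ofReal (ε : ℝ) :=
            ENNReal.ofReal_add (hE_pos s).le hεR.le
        _ = ENNReal.ofReal (E s) + ε := by rw [ENNReal.ofReal_coe_nnreal]
    · rw [← hhaz' s hs.le]
      exact measure_mono (fun ω hω => show s ≤ T ω from le_of_lt hω)
  have hC_Ici : ∀ s : ℝ, P (C ⁻¹' Set.Ici s) = μC (Set.Ici s) := fun s =>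
    (Measure.map_apply hCmeas measurableSet_Ici).symm
  have hUset : ∀ s : ℝ, {ω | s ≤ U ω} = T ⁻¹' Set.Ici s ∩ C ⁻¹' Set.Ici s := by
    intro s; ext ω
    simp [hU ω, le_min_iff, Set.mem_preimage]
  have hPU : ∀ s : ℝ, 0 < s →
      P {ω | s ≤ U ω} = ENNReal.ofReal (E s) * μC (Set.Ici s) := by
    intro s hs
    rw [hUset s, hTC.measure_inter_preimage_eq_mul _ _ measurableSet_Ici measurableSet_Ici,
      hT_Ici s hs, hC_Ici s]
  -- LHS computation
  set f : ℝ × ℝ → ℝ := fun p => if p.1 ≤ p.2 ∧ p.1 ≤ τ then h p.1 else 0 with hfdef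
  have hset_meas : MeasurableSet {p : ℝ × ℝ | p.1 ≤ p.2 ∧ p.1 ≤ τ} := by
    have : {p : ℝ × ℝ | p.1 ≤ p.2 ∧ p.1 ≤ τ}
        = {p : ℝ × ℝ | p.1 ≤ p.2} ∩ (Prod.fst ⁻¹' Set.Iic τ) := rfl
    rw [this]
    exact (measurableSet_le measurable_fst measurable_snd).inter
      (measurable_fst measurableSet_Iic)
  have hf_meas : Measurable f :=
    Measurable.ite hset_meas (hh_meas.comp measurable_fst) measurable_const
  have hf_bd : ∀ p, |f p| ≤ M := by
    intro p
    by_cases hp : p.1 ≤ p.2 ∧ p.1 ≤ τ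
    · simp only [hfdef, hp, if_true]; exact hM _
    · simp only [hfdef, hp, if_false]; simpa using hM0
  have hf_int : Integrable f (μT.prod μC) := by
    apply Integrable.mono' (integrable_const M) hf_meas.aestronglyMeasurable
    exact Filter.Eventually.of_forall fun p => by rw [Real.norm_eq_abs]; exact hf_bd p
  set g : ℝ → ℝ := fun t => h t * (μC (Set.Ici t)).toReal with hgdef
  have step1 : ∀ ω, (if T ω ≤ C ω ∧ U ω ≤ τ then h (U ω) else 0) = f (T ω, C ω) := by
    intro ω
    by_cases hTCω : T ω ≤ C ω
    · have hUω : U ω = T ω := by rw [hU ω]; exact min_eq_left hTCω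
      simp [hfdef, hUω, hTCω]
    · simp [hfdef, hTCω]
  have inner1 : ∀ t : ℝ, ∫ c, f (t, c) ∂μC = (Set.Iic τ).indicator g t := by
    intro t
    have h1 : (fun c => f (t, c))
        = (Set.Ici t).indicator (fun _ => if t ≤ τ then h t else 0) := by
      funext c
      by_cases hc : t ≤ c
      · rw [Set.indicator_of_mem (Set.mem_Ici.mpr hc)]
        simp [hfdef, hc]
      · rw [Set.indicator_of_notMem (fun hmem => hc (Set.mem_Ici.mp hmem))]
        simp [hfdef, hc]
    rw [h1, integral_indicator_const _ measurableSet_Ici]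
    by_cases ht : t ≤ τ
    · rw [Set.indicator_of_mem (Set.mem_Iic.mpr ht)]
      simp only [ht, if_true, smul_eq_mul, hgdef]
      exact mul_comm _ _
    · rw [Set.indicator_of_notMem (fun hmem => ht (Set.mem_Iic.mp hmem))]
      simp [ht]
  have hlhs1 : ∫ ω, (if T ω ≤ C ω ∧ U ω ≤ τ then h (U ω) else 0) ∂P
      = ∫ t in Set.Ioc 0 τ, g t ∂μT := by
    calc ∫ ω, (if T ω ≤ C ω ∧ U ω ≤ τ then h (U ω) else 0) ∂P
        = ∫ ω, f (T ω, C ω) ∂P := integral_congr_ae (Filter.Eventually.of_forall step1)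
      _ = ∫ p, f p ∂(P.map (fun ω => (T ω, C ω))) :=
          (integral_map (hTmeas.prodMk hCmeas).aemeasurable
            hf_meas.aestronglyMeasurable).symm
      _ = ∫ p, f p ∂(μT.prod μC) := by
          rw [(indepFun_iff_map_prod_eq_prod_map_map hTmeas.aemeasurable
            hCmeas.aemeasurable).mp hTC]
      _ = ∫ t, ∫ c, f (t, c) ∂μC ∂μT := integral_prod f hf_int
      _ = ∫ t, (Set.Iic τ).indicator g t ∂μT :=
          integral_congr_ae (Filter.Eventually.of_forall inner1)
      _ = ∫ t, (Set.Ioc 0 τ).indicator g t ∂μT := by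
          apply integral_congr_ae
          rw [Filter.EventuallyEq, ae_iff]
          apply measure_mono_null _ hμT_Iic0
          intro t ht'
          simp only [Set.mem_setOf_eq] at ht'
          by_contra h0
          apply ht'
          simp only [Set.mem_Iic, not_le] at h0
          have : t ∈ Set.Iic τ ↔ t ∈ Set.Ioc 0 τ := by
            simp [Set.mem_Iic, Set.mem_Ioc, h0]
          by_cases htτ : t ≤ τ
          · rw [Set.indicator_of_mem (Set.mem_Iic.mpr htτ),
              Set.indicator_of_mem (this.mp htτ)]
          · rw [Set.indicator_of_notMem (fun hmem => htτ (Set.mem_Iic.mp hmem)),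
              Set.indicator_of_notMem (fun hmem => htτ (Set.mem_Ioc.mp hmem).2)]
      _ = ∫ t in Set.Ioc 0 τ, g t ∂μT := integral_indicator measurableSet_Ioc
  have hlhs2 : ∫ t in Set.Ioc 0 τ, g t ∂μT
      = ∫ t in Set.Ioc 0 τ, (lam t * E t) * g t ∂volume := by
    rw [show ∫ t in Set.Ioc 0 τ, g t ∂μT = ∫ t, g t ∂(μT.restrict (Set.Ioc 0 τ)) from rfl,
      hrest, hνdef, restrict_withDensity measurableSet_Ioc,
      integral_withDensity_eq_integral_smul hdens_meas]
    apply integral_congr_ae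
    apply Filter.Eventually.of_forall
    intro t
    show dens t • g t = lam t * E t * g t
    rw [NNReal.smul_def, smul_eq_mul, hdensdef]
    congr 1
    exact Real.coe_toNNReal _ (mul_nonneg (hlam_nonneg t) (hE_pos t).le)
  -- RHS computation
  set k : Ω → ℝ → ℝ := fun ω s => h s * ((if s ≤ U ω then (1:ℝ) else 0) * lam s) with hkdef
  have hk_meas : Measurable (Function.uncurry k) := by
    have hA : MeasurableSet {p : Ω × ℝ | p.2 ≤ U p.1} :=
      measurableSet_le measurable_snd (hU_meas.comp measurable_fst)
    exact (hh_meas.comp measurable_snd).mul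
      ((Measurable.ite hA measurable_const measurable_const).mul
        (hlam_meas.comp measurable_snd))
  have hlam_int : IntegrableOn lam (Set.Ioc 0 τ) volume := by
    have := intervalIntegrable_iff.mp (h_ii 0 τ)
    rwa [Set.uIoc_of_le hτ.le] at this
  have hdom_int : Integrable (fun p : Ω × ℝ => M * lam p.2)
      (P.prod (volume.restrict (Set.Ioc 0 τ))) := by
    have hmm : AEStronglyMeasurable (fun p : Ω × ℝ => M * lam p.2)
        (P.prod (volume.restrict (Set.Ioc 0 τ))) := by
      apply Measurable.aestronglyMeasurable; fun_prop
    rw [integrable_prod_iff hmm]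
    constructor
    · exact Filter.Eventually.of_forall fun ω => hlam_int.const_mul M
    · have heq : (fun x : Ω => ∫ (y : ℝ) in Set.Ioc 0 τ, ‖M * lam (x, y).2‖)
          = fun _ : Ω => ∫ (y : ℝ) in Set.Ioc 0 τ, ‖M * lam y‖ := rfl
      rw [heq]
      apply integrable_const
  have hk_int : Integrable (Function.uncurry k)
      (P.prod (volume.restrict (Set.Ioc 0 τ))) := by
    apply Integrable.mono' hdom_int hk_meas.aestronglyMeasurable
    apply Filter.Eventually.of_forall
    rintro ⟨ω, s⟩
    rw [Real.norm_eq_abs]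
    show |h s * ((if s ≤ U ω then (1:ℝ) else 0) * lam s)| ≤ M * lam s
    by_cases hsu : s ≤ U ω
    · rw [if_pos hsu, one_mul, abs_mul, abs_of_nonneg (hlam_nonneg s)]
      exact mul_le_mul_of_nonneg_right (hM s) (hlam_nonneg s)
    · rw [if_neg hsu, zero_mul, mul_zero, abs_zero]
      exact mul_nonneg hM0 (hlam_nonneg s)
  have hrhs1 : ∫ ω, (∫ s in (0:ℝ)..τ, h s * ((if s ≤ U ω then (1 : ℝ) else 0) * lam s)) ∂P
      = ∫ s in Set.Ioc 0 τ, (∫ ω, k ω s ∂P) ∂volume := by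
    calc ∫ ω, (∫ s in (0:ℝ)..τ, h s * ((if s ≤ U ω then (1 : ℝ) else 0) * lam s)) ∂P
        = ∫ ω, (∫ s in Set.Ioc 0 τ, k ω s ∂volume) ∂P := by
          apply integral_congr_ae
          apply Filter.Eventually.of_forall
          intro ω
          exact intervalIntegral.integral_of_le hτ.le
      _ = ∫ s in Set.Ioc 0 τ, (∫ ω, k ω s ∂P) ∂volume := integral_integral_swap hk_int
  have hinner2 : ∀ s : ℝ, ∫ ω, k ω s ∂P = (h s * lam s) * (P {ω | s ≤ U ω}).toReal := by
    intro s
    have hmeasU : MeasurableSet {ω | s ≤ U ω} := by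
      have : {ω | s ≤ U ω} = U ⁻¹' Set.Ici s := rfl
      rw [this]; exact hU_meas measurableSet_Ici
    have h1 : ∀ ω, k ω s
        = (h s * lam s) * ({ω | s ≤ U ω}.indicator (fun _ => (1:ℝ)) ω) := by
      intro ω
      by_cases hsu : s ≤ U ω
      · rw [Set.indicator_of_mem (show ω ∈ {ω' | s ≤ U ω'} from hsu)]
        simp only [hkdef, hsu, if_pos]
        ring
      · rw [Set.indicator_of_notMem (show ω ∉ {ω' | s ≤ U ω'} from hsu)]
        simp [hkdef, hsu]
    rw [integral_congr_ae (Filter.Eventually.of_forall h1), integral_const_mul,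
      integral_indicator_const _ hmeasU]
    simp [Measure.real]
  have hrhs2 : ∫ s in Set.Ioc 0 τ, (∫ ω, k ω s ∂P) ∂volume
      = ∫ s in Set.Ioc 0 τ, (lam s * E s) * g s ∂volume := by
    apply setIntegral_congr_fun measurableSet_Ioc
    intro s hs
    show (∫ ω, k ω s ∂P) = (lam s * E s) * g s
    rw [hinner2 s, hPU s hs.1, ENNReal.toReal_mul, ENNReal.toReal_ofReal (hE_pos s).le,
      hgdef]
    ring
  rw [hlhs1, hlhs2, hrhs1, hrhs2]
end

section
/- Suppose (α̌, β̌) ∈ ℝ × ℝ^p satisfies the partial-likelihood score equations for the exposure and for every selected covariate: Σ_{i=1}^n δ_i 1{U_i ≤ τ} (A_i − Ā_n(U_i)) = 0 and, for each j in a subset B ⊆ {1, …, p}, Σ_{i=1}^n δ_i 1{U_i ≤ τ} (L_{ij} − (L̄_n(U_i))_j) = 0, where Ā_n and L̄_n are evaluated at (α̌, β̌). If γ̌ ∈ ℝ^p satisfies γ̌_j = 0 for every j ∉ B, then Σ_{i=1}^n Û_i(α̌, β̌, γ̌) = 0; that is, the post-triple-selection estimator solves the empirical decorrelated score equation (the equation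 that the one-step estimator of Fang et al. linearizes). -/
open Finset Real

/-- If `(α̌, β̌)` satisfies the partial-likelihood score equations for the
exposure and for every selected covariate `j ∈ B`, and `γ̌` is supported on `B`, then
`Σ_i Û_i(α̌, β̌, γ̌) = 0`: the post-triple-selection estimator solves the empirical
decorrelated score equation. -/
theorem post_triple_selection_solves_decorrelated_score
    {n p : ℕ} (hn : 1 ≤ n)
    (U : Fin n → ℝ) (δ : Fin n → Bool) (A : Fin n → ℝ) (L : Fin n → Fin p → ℝ)
    (hUpos : ∀ i, 0 < U i)
    (τ : ℝ) (hτ : 0 < τ)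
    (α : ℝ) (β γ : Fin p → ℝ)
    (S0 : ℝ → ℝ)
    (hS0 : ∀ t : ℝ, S0 t = ∑ j, (if t ≤ U j then (1 : ℝ) else 0)
        * Real.exp (α * A j + ∑ l, β l * L j l))
    (hS0pos : ∀ k, δ k = true → U k ≤ τ → 0 < S0 (U k))
    (Abar : ℝ → ℝ) (Lbar : ℝ → Fin p → ℝ)
    (hAbar : ∀ t : ℝ, Abar t =
      (∑ j, A j * ((if t ≤ U j then (1 : ℝ) else 0)
          * Real.exp (α * A j + ∑ l, β l * L j l))) / S0 t)
    (hLbar : ∀ (t : ℝ) (l : Fin p), Lbar t l =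
      (∑ j, L j l * ((if t ≤ U j then (1 : ℝ) else 0)
          * Real.exp (α * A j + ∑ l', β l' * L j l'))) / S0 t)
    (w : Fin n → ℝ → ℝ)
    (hw : ∀ (i : Fin n) (t : ℝ), w i t =
      A i - Abar t - ∑ l, γ l * (L i l - Lbar t l))
    (Uhat : Fin n → ℝ)
    (hUhat : ∀ i, Uhat i =
      (if δ i = true ∧ U i ≤ τ then w i (U i) else 0)
        - ∑ k, (if δ k = true ∧ U k ≤ τ then
            (if U k ≤ U i then (1 : ℝ) else 0)
              * Real.exp (α * A i + ∑ l, β l * L i l) * w i (U k) / S0 (U k)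
          else 0))
    (B : Finset (Fin p))
    (hscoreA : ∑ i, (if δ i = true ∧ U i ≤ τ then A i - Abar (U i) else 0) = 0)
    (hscoreL : ∀ l ∈ B,
      ∑ i, (if δ i = true ∧ U i ≤ τ then L i l - Lbar (U i) l else 0) = 0)
    (hγ : ∀ l ∉ B, γ l = 0) :
    ∑ i, Uhat i = 0 := by

  -- key lemma: the weighted residual sum at any at-risk time vanishes
  have key : ∀ t : ℝ, 0 < S0 t →
      ∑ i, (if t ≤ U i then (1:ℝ) else 0)
        * Real.exp (α * A i + ∑ l, β l * L i l) * w i t = 0 := by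
    intro t ht
    have hne : S0 t ≠ 0 := ne_of_gt ht
    set c : Fin n → ℝ := fun i =>
      (if t ≤ U i then (1:ℝ) else 0) * Real.exp (α * A i + ∑ l, β l * L i l) with hc
    have hS : ∑ i, c i = S0 t := (hS0 t).symm
    have hA : ∑ i, c i * A i = Abar t * S0 t := by
      rw [hAbar, div_mul_cancel₀ _ hne]
      exact Finset.sum_congr rfl (fun i _ => by rw [hc]; ring)
    have hL : ∀ l, ∑ i, c i * L i l = Lbar t l * S0 t := by
      intro l
      rw [hLbar, div_mul_cancel₀ _ hne]
      exact Finset.sum_congr rfl (fun i _ => by rw [hc]; ring)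
    have expand : ∀ i, c i * w i t =
        c i * A i - c i * Abar t - ∑ l, γ l * (c i * L i l - c i * Lbar t l) := by
      intro i
      rw [hw, mul_sub, mul_sub, Finset.mul_sum]
      congr 1
      exact Finset.sum_congr rfl (fun l _ => by ring)
    calc ∑ i, c i * w i t
        = ∑ i, (c i * A i - c i * Abar t - ∑ l, γ l * (c i * L i l - c i * Lbar t l)) :=
          Finset.sum_congr rfl (fun i _ => expand i)
      _ = (∑ i, c i * A i) - (∑ i, c i) * Abar t
            - ∑ l, γ l * ((∑ i, c i * L i l) - (∑ i, c i) * Lbar t l) := by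
          rw [Finset.sum_sub_distrib, Finset.sum_sub_distrib, Finset.sum_comm]
          congr 1
          · congr 1
            rw [Finset.sum_mul]
          · refine Finset.sum_congr rfl (fun l _ => ?_)
            rw [← Finset.mul_sum, Finset.sum_sub_distrib, ← Finset.sum_mul]
      _ = 0 := by
          rw [hS, hA]
          have : ∀ l ∈ Finset.univ (α := Fin p),
              γ l * ((∑ i, c i * L i l) - S0 t * Lbar t l) = 0 := by
            intro l _
            rw [hL l]
            ring
          rw [Finset.sum_congr rfl this, Finset.sum_const_zero]
          ring
  -- second (integral) part of each Uhat sums to zero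
  have hsecond : ∑ i, ∑ k, (if δ k = true ∧ U k ≤ τ then
        (if U k ≤ U i then (1 : ℝ) else 0)
          * Real.exp (α * A i + ∑ l, β l * L i l) * w i (U k) / S0 (U k)
      else 0) = 0 := by
    rw [Finset.sum_comm]
    refine Finset.sum_eq_zero (fun k _ => ?_)
    by_cases hk : δ k = true ∧ U k ≤ τ
    · simp only [hk, and_self, if_true]
      have h0 := key (U k) (hS0pos k hk.1 hk.2)
      rw [← Finset.sum_div, h0, zero_div]
    · simp only [hk, if_false, Finset.sum_const_zero]
  -- first part sums to zero
  have hfirst : ∑ i, (if δ i = true ∧ U i ≤ τ then w i (U i) else 0) = 0 := by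
    have expand : ∀ i, (if δ i = true ∧ U i ≤ τ then w i (U i) else 0) =
        (if δ i = true ∧ U i ≤ τ then A i - Abar (U i) else 0)
          - ∑ l, γ l * (if δ i = true ∧ U i ≤ τ then L i l - Lbar (U i) l else 0) := by
      intro i
      by_cases hi : δ i = true ∧ U i ≤ τ
      · simp only [hi, and_self, if_true, hw]
      · simp only [hi, if_false, mul_zero, Finset.sum_const_zero, sub_zero]
    rw [Finset.sum_congr rfl (fun i _ => expand i), Finset.sum_sub_distrib, hscoreA,
      Finset.sum_comm]
    have : ∀ l ∈ Finset.univ (α := Fin p),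
        ∑ i, γ l * (if δ i = true ∧ U i ≤ τ then L i l - Lbar (U i) l else 0) = 0 := by
      intro l _
      rw [← Finset.mul_sum]
      by_cases hl : l ∈ B
      · rw [hscoreL l hl, mul_zero]
      · rw [hγ l hl, zero_mul]
    rw [Finset.sum_congr rfl this, Finset.sum_const_zero]
    ring
  calc ∑ i, Uhat i
      = ∑ i, ((if δ i = true ∧ U i ≤ τ then w i (U i) else 0)
          - ∑ k, (if δ k = true ∧ U k ≤ τ then
              (if U k ≤ U i then (1 : ℝ) else 0)
                * Real.exp (α * A i + ∑ l, β l * L i l) * w i (U k) / S0 (U k)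
            else 0)) := Finset.sum_congr rfl (fun i _ => hUhat i)
    _ = 0 := by rw [Finset.sum_sub_distrib, hfirst, hsecond]; ring
end
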